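/- Let n ≥ 3, θ₀ = eₙ, ξ₀ = e_{n−1}, and let S ⊆ ℝⁿ be the set of η for which there exists θ with |θ − θ₀| < δ (for any fixed δ > 0), ⟨θ, ξ₀⟩ = 0, and ⟨θ, η⟩ = 0. Then there exist N = n(n+1)/2 vectors η₁, …, η_N ∈ S such that the symmetric matrices η_k ⊗ η_k, k = 1, …, N, are linearly independent; consequently any symmetric 2-tensor f with ⟨f η_k, η_k⟩ = 0 for all k vanishes. -/

import Mathlib

open Matrix


lemma std_indep (n : ℕ) :
    LinearIndependent ℝ (fun p : {p : Fin n × Fin n // p.1 ≤ p.2} =>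
      vecMulVec ((Pi.single p.1.1 1 + Pi.single p.1.2 1 : Fin n → ℝ))
        ((Pi.single p.1.1 1 + Pi.single p.1.2 1 : Fin n → ℝ))) := by
  rw [Fintype.linearIndependent_iff]
  intro c hc
  have hent : ∀ a b : Fin n,
      (∑ p : {p : Fin n × Fin n // p.1 ≤ p.2}, c p *
        (((Pi.single p.1.1 1 + Pi.single p.1.2 1 : Fin n → ℝ) a) *
         ((Pi.single p.1.1 1 + Pi.single p.1.2 1 : Fin n → ℝ) b))) = 0 := by
    intro a b
    have := congrFun (congrFun hc a) b
    simpa [Matrix.sum_apply, vecMulVec_apply] using this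
  have h1 : ∀ (i j : Fin n) (hij : i < j), c ⟨(i,j), hij.le⟩ = 0 := by
    intro i j hij
    have h := hent i j
    rw [Finset.sum_eq_single (⟨(i,j), hij.le⟩ : {p : Fin n × Fin n // p.1 ≤ p.2})] at h
    · simpa [Pi.single_apply, hij.ne, hij.ne'] using h
    · rintro ⟨⟨x,y⟩,hxy⟩ - hne
      have hne' : ¬(x = i ∧ y = j) := by
        rintro ⟨rfl,rfl⟩; exact hne rfl
      simp only [Pi.add_apply, Pi.single_apply]
      have key : ((if i = x then (1:ℝ) else 0) + if i = y then 1 else 0) *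
          ((if j = x then (1:ℝ) else 0) + if j = y then 1 else 0) = 0 := by
        have hijv : (i:ℕ) < (j:ℕ) := hij
        have hxyv : (x:ℕ) ≤ (y:ℕ) := hxy
        have hnev : ¬((x:ℕ) = (i:ℕ) ∧ (y:ℕ) = (j:ℕ)) := by
          rintro ⟨ha,hb⟩; exact hne' ⟨Fin.ext ha, Fin.ext hb⟩
        simp only [Fin.ext_iff]
        split_ifs <;> try norm_num
        all_goals exfalso; omega
      rw [key, mul_zero]
    · intro habs; exact absurd (Finset.mem_univ _) habs
  have h2 : ∀ i : Fin n, c ⟨(i,i), le_refl i⟩ = 0 := by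
    intro i
    have h := hent i i
    rw [Finset.sum_eq_single (⟨(i,i), le_refl i⟩ : {p : Fin n × Fin n // p.1 ≤ p.2})] at h
    · simp [Pi.single_apply] at h
      linarith
    · rintro ⟨⟨x,y⟩,hxy⟩ - hne
      rcases eq_or_lt_of_le (show x ≤ y from hxy) with rfl|hlt
      · have hxi : x ≠ i := by
          intro h; exact hne (by subst h; rfl)
        simp [Pi.single_apply, if_neg (fun h : i = x => hxi h.symm)]
      · rw [h1 x y hlt]; ring
    · intro habs; exact absurd (Finset.mem_univ _) habs
  rintro ⟨⟨i,j⟩,hij⟩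
  rcases eq_or_lt_of_le (show i ≤ j from hij) with rfl|hlt
  · exact h2 i
  · exact h1 i j hlt

theorem stmt13 (n : ℕ) (hn : 3 ≤ n) (δ : ℝ) (hδ : 0 < δ) :
    ∃ η : Fin (n * (n + 1) / 2) → Fin n → ℝ,
      (∀ k, ∃ θ : Fin n → ℝ,
        (θ - Pi.single (⟨n - 1, by omega⟩ : Fin n) 1) ⬝ᵥ
            (θ - Pi.single (⟨n - 1, by omega⟩ : Fin n) 1) < δ ^ 2 ∧
        θ ⬝ᵥ Pi.single (⟨n - 2, by omega⟩ : Fin n) 1 = 0 ∧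
        θ ⬝ᵥ η k = 0) ∧
      LinearIndependent ℝ (fun k => vecMulVec (η k) (η k)) ∧
      ∀ f : Matrix (Fin n) (Fin n) ℝ, f.IsSymm →
        (∀ k, η k ⬝ᵥ f.mulVec (η k) = 0) → f = 0 := by
  have hn1 : n - 1 < n := by omega
  have hn2 : n - 2 < n := by omega
  have hn0 : 0 < n := by omega
  set N1 : Fin n := ⟨n-1, hn1⟩ with hN1
  set N2 : Fin n := ⟨n-2, hn2⟩ with hN2
  set Z : Fin n := ⟨0, hn0⟩ with hZ
  have hN1N2 : N1 ≠ N2 := by simp [hN1, hN2, Fin.ext_iff]; omega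
  have hZN1 : Z ≠ N1 := by simp [hZ, hN1, Fin.ext_iff]; omega
  have hZN2 : Z ≠ N2 := by simp [hZ, hN2, Fin.ext_iff]; omega
  set ε : ℝ := δ/2 with hε
  have hε0 : ε ≠ 0 := by rw [hε]; positivity
  set u : Fin n → Fin n → ℝ :=
    fun a => if a = N1 then Pi.single Z 1 + Pi.single N1 ε else Pi.single a 1 with hu
  have hcard : Fintype.card {p : Fin n × Fin n // p.1 ≤ p.2} = n * (n + 1) / 2 := by
    rw [← Fintype.card_congr (Sym2.sortEquiv (α := Fin n)), Sym2.card]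
    simp [Nat.choose_two_right, Nat.mul_comm]
  have e : Fin (n * (n + 1) / 2) ≃ {p : Fin n × Fin n // p.1 ≤ p.2} :=
    (Fintype.equivFinOfCardEq hcard).symm
  refine ⟨fun k => u (e k).1.1 + u (e k).1.2, ?_, ?_, ?_⟩
  · -- existence of θ
    intro k
    rcases hp : e k with ⟨⟨i,j⟩,hle⟩
    replace hle : i ≤ j := hle
    by_cases hj : j = N1
    · subst hj
      by_cases hi : i = N1
      · subst hi
        refine ⟨(Pi.single N1 1 : Fin n → ℝ) + (-ε) • (Pi.single Z 1 : Fin n → ℝ), ?_, ?_, ?_⟩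
        · show ((Pi.single N1 1 : Fin n → ℝ) + (-ε) • (Pi.single Z 1 : Fin n → ℝ) - Pi.single N1 1) ⬝ᵥ
              (Pi.single N1 1 + (-ε) • (Pi.single Z 1 : Fin n → ℝ) - Pi.single N1 1) < δ ^ 2
          rw [add_sub_cancel_left]
          simp only [smul_dotProduct, dotProduct_smul, single_dotProduct, one_mul,
            Pi.single_apply, if_pos rfl, smul_eq_mul, if_true]
          rw [hε]; nlinarith [hδ, sq_nonneg δ]
        · show ((Pi.single N1 1 : Fin n → ℝ) + (-ε) • (Pi.single Z 1 : Fin n → ℝ)) ⬝ᵥ Pi.single N2 1 = 0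
          simp [add_dotProduct, smul_dotProduct, single_dotProduct,
            Pi.single_apply, hN1N2, hZN2]
        · show ((Pi.single N1 1 : Fin n → ℝ) + (-ε) • (Pi.single Z 1 : Fin n → ℝ)) ⬝ᵥ
            (u (e k).1.1 + u (e k).1.2) = 0
          rw [hp]
          show ((Pi.single N1 1 : Fin n → ℝ) + (-ε) • (Pi.single Z 1 : Fin n → ℝ)) ⬝ᵥ (u N1 + u N1) = 0
          simp [hu, add_dotProduct, dotProduct_add, smul_dotProduct,
            single_dotProduct, Pi.single_apply, hZN1, Ne.symm hZN1]
          try ring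
      · have hiv : (i:ℕ) ≠ n - 1 := fun h => hi (Fin.ext h)
        by_cases hiZ : i = Z
        · subst hiZ
          refine ⟨(Pi.single N1 1 : Fin n → ℝ) + (-(ε/2)) • (Pi.single Z 1 : Fin n → ℝ), ?_, ?_, ?_⟩
          · show ((Pi.single N1 1 : Fin n → ℝ) + (-(ε/2)) • (Pi.single Z 1 : Fin n → ℝ) - Pi.single N1 1) ⬝ᵥ
                (Pi.single N1 1 + (-(ε/2)) • (Pi.single Z 1 : Fin n → ℝ) - Pi.single N1 1) < δ ^ 2
            rw [add_sub_cancel_left]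
            simp only [smul_dotProduct, dotProduct_smul, single_dotProduct, one_mul,
              Pi.single_apply, if_pos rfl, smul_eq_mul, if_true]
            rw [hε]; nlinarith [hδ, sq_nonneg δ]
          · show ((Pi.single N1 1 : Fin n → ℝ) + (-(ε/2)) • (Pi.single Z 1 : Fin n → ℝ)) ⬝ᵥ Pi.single N2 1 = 0
            simp [add_dotProduct, smul_dotProduct, single_dotProduct,
              Pi.single_apply, hN1N2, hZN2]
          · show ((Pi.single N1 1 : Fin n → ℝ) + (-(ε/2)) • (Pi.single Z 1 : Fin n → ℝ)) ⬝ᵥ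
              (u (e k).1.1 + u (e k).1.2) = 0
            rw [hp]
            show ((Pi.single N1 1 : Fin n → ℝ) + (-(ε/2)) • (Pi.single Z 1 : Fin n → ℝ)) ⬝ᵥ (u Z + u N1) = 0
            simp [hu, add_dotProduct, dotProduct_add, smul_dotProduct,
              single_dotProduct, Pi.single_apply, hZN1, Ne.symm hZN1]
            try ring
        · refine ⟨(Pi.single N1 1 : Fin n → ℝ) + (-ε) • (Pi.single Z 1 : Fin n → ℝ), ?_, ?_, ?_⟩
          · show ((Pi.single N1 1 : Fin n → ℝ) + (-ε) • (Pi.single Z 1 : Fin n → ℝ) - Pi.single N1 1) ⬝ᵥ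
                (Pi.single N1 1 + (-ε) • (Pi.single Z 1 : Fin n → ℝ) - Pi.single N1 1) < δ ^ 2
            rw [add_sub_cancel_left]
            simp only [smul_dotProduct, dotProduct_smul, single_dotProduct, one_mul,
              Pi.single_apply, if_pos rfl, smul_eq_mul, if_true]
            rw [hε]; nlinarith [hδ, sq_nonneg δ]
          · show ((Pi.single N1 1 : Fin n → ℝ) + (-ε) • (Pi.single Z 1 : Fin n → ℝ)) ⬝ᵥ Pi.single N2 1 = 0
            simp [add_dotProduct, smul_dotProduct, single_dotProduct,
              Pi.single_apply, hN1N2, hZN2]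
          · show ((Pi.single N1 1 : Fin n → ℝ) + (-ε) • (Pi.single Z 1 : Fin n → ℝ)) ⬝ᵥ
              (u (e k).1.1 + u (e k).1.2) = 0
            rw [hp]
            show ((Pi.single N1 1 : Fin n → ℝ) + (-ε) • (Pi.single Z 1 : Fin n → ℝ)) ⬝ᵥ (u i + u N1) = 0
            simp [hu, hi, add_dotProduct, dotProduct_add, smul_dotProduct,
              single_dotProduct, Pi.single_apply, hZN1, Ne.symm hZN1, Ne.symm hi,
              Ne.symm hiZ]
            try ring
    · have hjv : (j:ℕ) ≠ n - 1 := fun h => hj (Fin.ext h)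
      have hiN1 : i ≠ N1 := by
        intro h
        have h1 : (i:ℕ) = n - 1 := congrArg Fin.val h
        have h2 : (i:ℕ) ≤ (j:ℕ) := hle
        have h3 : (j:ℕ) < n := j.isLt
        omega
      refine ⟨(Pi.single N1 1 : Fin n → ℝ), ?_, ?_, ?_⟩
      · show ((Pi.single N1 1 : Fin n → ℝ) - Pi.single N1 1) ⬝ᵥ (Pi.single N1 1 - Pi.single N1 1) < δ ^ 2
        simp only [sub_self, zero_dotProduct]
        positivity
      · show (Pi.single N1 1 : Fin n → ℝ) ⬝ᵥ Pi.single N2 1 = 0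
        simp [single_dotProduct, Pi.single_apply, hN1N2]
      · show (Pi.single N1 1 : Fin n → ℝ) ⬝ᵥ (u (e k).1.1 + u (e k).1.2) = 0
        rw [hp]
        show (Pi.single N1 1 : Fin n → ℝ) ⬝ᵥ (u i + u j) = 0
        simp [hu, hiN1, hj, single_dotProduct, Pi.single_apply, Ne.symm hiN1, Ne.symm hj]
  · -- linear independence
    set Q : Matrix (Fin n) (Fin n) ℝ := Matrix.of fun a b =>
      if b = N1 then (if a = N1 then ε⁻¹ else 0) - (if a = Z then ε⁻¹ else 0)
      else (if a = b then 1 else 0) with hQ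
    have hQu : ∀ a, Q *ᵥ u a = Pi.single a 1 := by
      intro a
      by_cases ha : a = N1
      · subst ha
        have : u N1 = Pi.single Z 1 + Pi.single N1 ε := by simp [hu]
        rw [this, Matrix.mulVec_add, Matrix.mulVec_single, Matrix.mulVec_single]
        funext r
        by_cases hr : r = N1
        · subst hr
          simp [hQ, Ne.symm hZN1, hZN1, Pi.single_apply]
          field_simp
        · by_cases hrZ : r = Z
          · subst hrZ
            simp [hQ, hZN1, Ne.symm hZN1, Pi.single_apply, Ne.symm hr]
            field_simp
            norm_num
          · simp [hQ, hZN1, hr, hrZ, Pi.single_apply, Ne.symm hr]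
      · have : u a = Pi.single a 1 := by simp [hu, ha]
        rw [this, Matrix.mulVec_single]
        funext r
        simp [hQ, ha, Pi.single_apply]
    have hconj : ∀ x y : Fin n → ℝ, Q * vecMulVec x y * Qᵀ = vecMulVec (Q *ᵥ x) (Q *ᵥ y) := by
      intro x y
      rw [vecMulVec_eq Unit, vecMulVec_eq Unit, ← Matrix.mul_assoc,
        Matrix.mul_assoc (Q * replicateCol Unit x), ← replicateCol_mulVec, ← replicateRow_vecMul,
        vecMul_transpose]
    let conjQ : Matrix (Fin n) (Fin n) ℝ →ₗ[ℝ] Matrix (Fin n) (Fin n) ℝ :=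
      { toFun := fun M => Q * M * Qᵀ
        map_add' := by
          intro x y
          show Q * (x + y) * Qᵀ = Q * x * Qᵀ + Q * y * Qᵀ
          rw [Matrix.mul_add, Matrix.add_mul]
        map_smul' := by
          intro r x
          show Q * (r • x) * Qᵀ = r • (Q * x * Qᵀ)
          rw [Matrix.mul_smul, Matrix.smul_mul] }
    have hcomp : LinearIndependent ℝ (fun p : {p : Fin n × Fin n // p.1 ≤ p.2} =>
        vecMulVec (u p.1.1 + u p.1.2) (u p.1.1 + u p.1.2)) := by
      apply LinearIndependent.of_comp conjQ
      have heq : (conjQ ∘ fun p : {p : Fin n × Fin n // p.1 ≤ p.2} =>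
          vecMulVec (u p.1.1 + u p.1.2) (u p.1.1 + u p.1.2)) =
          fun p : {p : Fin n × Fin n // p.1 ≤ p.2} =>
            vecMulVec ((Pi.single p.1.1 1 + Pi.single p.1.2 1 : Fin n → ℝ))
              ((Pi.single p.1.1 1 + Pi.single p.1.2 1 : Fin n → ℝ)) := by
        funext p
        show Q * vecMulVec _ _ * Qᵀ = _
        rw [hconj, Matrix.mulVec_add, hQu, hQu]
      rw [heq]
      exact std_indep n
    exact hcomp.comp e e.injective
  · -- vanishing
    intro f hf h0
    have hB : ∀ x y : Fin n → ℝ, x ⬝ᵥ f *ᵥ y = y ⬝ᵥ f *ᵥ x := by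
      intro x y
      rw [Matrix.dotProduct_mulVec, ← Matrix.mulVec_transpose, hf.eq, dotProduct_comm]
    have hquad : ∀ i j : Fin n, (u i + u j) ⬝ᵥ f *ᵥ (u i + u j) = 0 := by
      intro i j
      rcases le_total i j with h|h
      · have := h0 (e.symm ⟨(i,j), h⟩)
        simpa only [Equiv.apply_symm_apply] using this
      · have := h0 (e.symm ⟨(j,i), h⟩)
        simp only [Equiv.apply_symm_apply] at this
        rw [add_comm (u i) (u j)]
        exact this
    have hBadd : ∀ x y : Fin n → ℝ, (x + y) ⬝ᵥ f *ᵥ (x + y) =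
        x ⬝ᵥ f *ᵥ x + x ⬝ᵥ f *ᵥ y + y ⬝ᵥ f *ᵥ x + y ⬝ᵥ f *ᵥ y := by
      intro x y
      rw [Matrix.mulVec_add, add_dotProduct, dotProduct_add, dotProduct_add]; ring
    have hdiag : ∀ i, u i ⬝ᵥ f *ᵥ u i = 0 := by
      intro i
      have := hquad i i
      rw [hBadd] at this
      linarith
    have hoff : ∀ i j, u i ⬝ᵥ f *ᵥ u j = 0 := by
      intro i j
      have := hquad i j
      rw [hBadd, hdiag, hdiag, hB (u j) (u i)] at this
      linarith
    have hsingle : ∀ a b : Fin n, Pi.single a (1:ℝ) ⬝ᵥ f *ᵥ Pi.single b (1:ℝ) = 0 := by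
      have hw : ∀ a : Fin n, (Pi.single a 1 : Fin n → ℝ) =
          if a = N1 then ε⁻¹ • u N1 - ε⁻¹ • u Z else u a := by
        intro a
        by_cases ha : a = N1
        · subst ha
          have h1 : u N1 = Pi.single Z 1 + Pi.single N1 ε := by simp [hu]
          have h2 : u Z = Pi.single Z 1 := by simp [hu, hZN1]
          rw [if_pos rfl, h1, h2, ← smul_sub, add_sub_cancel_left,
            ← Pi.single_smul', smul_eq_mul, inv_mul_cancel₀ hε0]
        · simp [hu, ha]
      intro a b
      rw [hw a, hw b]
      by_cases ha : a = N1 <;> by_cases hb : b = N1 <;>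
        simp [ha, hb, sub_dotProduct, dotProduct_sub, smul_dotProduct, dotProduct_smul,
          Matrix.mulVec_sub, Matrix.mulVec_smul, hoff]
    ext a b
    simpa [single_dotProduct, Matrix.mulVec_single] using hsingle a b
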